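/- arXiv:2311.11321 — 4 statements merged into one kernel-verified Lean document; each statement's English description precedes it below -/
import Mathlib

section
/- If a finitely supported random variable X satisfies X ⫫ X' | Φ(X) for X' = f(X) a function of X (i.e., X is conditionally independent of f(X) given Φ(X)), then f(X) is almost surely a function of Φ(X); that is, there exists g with f(X) = g(Φ(X)) almost surely. -/
open scoped Classical

/-- Probability of an event under a finite mass function on the sample space `Ω`. -/
noncomputable def pr {Ω : Type*} [Fintype Ω] (p : Ω → ℝ) (E : Ω → Prop) : ℝ :=
  ∑ ω, if E ω then p ω else 0

lemma pr_nonneg {Ω : Type*} [Fintype Ω] (p : Ω → ℝ) (hp : ∀ ω, 0 ≤ p ω)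
    (E : Ω → Prop) : 0 ≤ pr p E :=
  Finset.sum_nonneg fun i _ => by split <;> simp [hp i]

lemma pr_pos_of {Ω : Type*} [Fintype Ω] (p : Ω → ℝ) (hp : ∀ ω, 0 ≤ p ω)
    (E : Ω → Prop) (ω : Ω) (hω : 0 < p ω) (hE : E ω) : 0 < pr p E := by
  apply Finset.sum_pos' (fun i _ => by split <;> simp [hp i])
  exact ⟨ω, Finset.mem_univ ω, by simp [hE, hω]⟩

lemma exists_of_pr_pos {Ω : Type*} [Fintype Ω] (p : Ω → ℝ) (hp : ∀ ω, 0 ≤ p ω)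
    (E : Ω → Prop) (h : 0 < pr p E) : ∃ ω, 0 < p ω ∧ E ω := by
  by_contra hc
  push_neg at hc
  have : pr p E = 0 := by
    apply Finset.sum_eq_zero
    intro ω _
    split
    · next hE => exact le_antisymm (le_of_not_gt fun h0 => hc ω h0 hE) (hp ω)
    · rfl
  simp [this] at h

/-- If `X ⫫ f(X) | Φ(X)` on a finite probability space, then `f(X)` is almost surely a
function of `Φ(X)`: there exists `g` with `f(X) = g(Φ(X))` almost surely. -/
theorem condIndep_self_implies_function_of_repr
    {Ω 𝒳 𝒴 𝒵 : Type*} [Fintype Ω]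
    (p : Ω → ℝ) (hp : ∀ ω, 0 ≤ p ω) (hsum : ∑ ω, p ω = 1)
    (X : Ω → 𝒳) (f : 𝒳 → 𝒴) (Φ : 𝒳 → 𝒵)
    (hCI : ∀ (x : 𝒳) (y : 𝒴) (φ : 𝒵), 0 < pr p (fun ω => Φ (X ω) = φ) →
      pr p (fun ω => X ω = x ∧ f (X ω) = y ∧ Φ (X ω) = φ) / pr p (fun ω => Φ (X ω) = φ)
        = (pr p (fun ω => X ω = x ∧ Φ (X ω) = φ) / pr p (fun ω => Φ (X ω) = φ)) *
          (pr p (fun ω => f (X ω) = y ∧ Φ (X ω) = φ) / pr p (fun ω => Φ (X ω) = φ))) :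
    ∃ g : 𝒵 → 𝒴, ∀ ω : Ω, 0 < p ω → f (X ω) = g (Φ (X ω)) := by
  -- key: f(X) constant on positive-mass fibers of Φ(X)
  have key : ∀ ω ω' : Ω, 0 < p ω → 0 < p ω' → Φ (X ω) = Φ (X ω') →
      f (X ω) = f (X ω') := by
    intro ω ω' hω hω' hΦ
    set φ := Φ (X ω') with hφ
    have hPφ : 0 < pr p (fun ω => Φ (X ω) = φ) :=
      pr_pos_of p hp _ ω hω hΦ
    have h1 : 0 < pr p (fun a => X a = X ω ∧ Φ (X a) = φ) :=
      pr_pos_of p hp _ ω hω ⟨rfl, hΦ⟩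
    have h2 : 0 < pr p (fun a => f (X a) = f (X ω') ∧ Φ (X a) = φ) :=
      pr_pos_of p hp _ ω' hω' ⟨rfl, rfl⟩
    have := hCI (X ω) (f (X ω')) φ hPφ
    have hpos : 0 < pr p (fun a => X a = X ω ∧ f (X a) = f (X ω') ∧ Φ (X a) = φ)
        / pr p (fun ω => Φ (X ω) = φ) := by
      rw [this]
      positivity
    have hnum : 0 < pr p (fun a => X a = X ω ∧ f (X a) = f (X ω') ∧ Φ (X a) = φ) := by
      by_contra hn
      have hz : pr p (fun a => X a = X ω ∧ f (X a) = f (X ω') ∧ Φ (X a) = φ) = 0 :=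
        le_antisymm (not_lt.1 hn) (pr_nonneg p hp _)
      rw [hz, zero_div] at hpos
      exact lt_irrefl 0 hpos
    obtain ⟨a, _, hXa, hfa, _⟩ := exists_of_pr_pos p hp _ hnum
    rw [← hXa, hfa]
  by_cases hne : ∃ ω : Ω, 0 < p ω
  · obtain ⟨ω0, hω0⟩ := hne
    haveI : Nonempty 𝒴 := ⟨f (X ω0)⟩
    refine ⟨fun φ => if h : ∃ ω, 0 < p ω ∧ Φ (X ω) = φ then f (X h.choose)
      else Classical.arbitrary 𝒴, fun ω hω => ?_⟩
    have h : ∃ ω', 0 < p ω' ∧ Φ (X ω') = Φ (X ω) := ⟨ω, hω, rfl⟩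
    simp only [dif_pos h]
    exact key ω h.choose hω h.choose_spec.1 h.choose_spec.2.symm
  · push_neg at hne
    exact ⟨fun _ => absurd hsum (by simp [fun ω => le_antisymm (hne ω) (hp ω)]), fun ω hω => absurd hω (not_lt.2 (hne ω))⟩
end

section
/- Suppose X = (X^∅, X^a, X^y, X^Δ) and the four conditional independencies X ⫫ X^∅ | Φ(X), X ⫫ X^a | Φ(X), X ⫫ X^y | Φ(X), X ⫫ X^Δ | Φ(X) hold on a finite probability space. Then Φ restricted to the support of X is injective. -/
open scoped Classical

/-- Conditional independence `X ⫫ f(X) | Φ(X)` on a finite probability space: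
`P(X = x, f(X) = y | Φ(X) = φ) = P(X = x | Φ(X) = φ) · P(f(X) = y | Φ(X) = φ)`
for every `φ` of positive probability. -/
def CondIndepGivenRepr {Ω 𝒳 𝒴 𝒵 : Type*} [Fintype Ω] (p : Ω → ℝ)
    (X : Ω → 𝒳) (f : 𝒳 → 𝒴) (Φ : 𝒳 → 𝒵) : Prop :=
  ∀ (x : 𝒳) (y : 𝒴) (φ : 𝒵), 0 < pr p (fun ω => Φ (X ω) = φ) →
    pr p (fun ω => X ω = x ∧ f (X ω) = y ∧ Φ (X ω) = φ) / pr p (fun ω => Φ (X ω) = φ)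
      = (pr p (fun ω => X ω = x ∧ Φ (X ω) = φ) / pr p (fun ω => Φ (X ω) = φ)) *
        (pr p (fun ω => f (X ω) = y ∧ Φ (X ω) = φ) / pr p (fun ω => Φ (X ω) = φ))

lemma pr_mono {Ω : Type*} [Fintype Ω] (p : Ω → ℝ) (hp : ∀ ω, 0 ≤ p ω) {E F : Ω → Prop}
    (h : ∀ ω, E ω → F ω) : pr p E ≤ pr p F := by
  refine Finset.sum_le_sum fun ω _ => ?_
  by_cases hE : E ω
  · simp [hE, h ω hE]
  · by_cases hF : F ω <;> simp [hE, hF, hp ω]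

lemma pr_congr {Ω : Type*} [Fintype Ω] (p : Ω → ℝ) {E F : Ω → Prop}
    (h : ∀ ω, E ω ↔ F ω) : pr p E = pr p F := by
  unfold pr; congr 1; funext ω; rw [h ω]

lemma pr_eq_zero {Ω : Type*} [Fintype Ω] (p : Ω → ℝ) {E : Ω → Prop}
    (h : ∀ ω, ¬ E ω) : pr p E = 0 := by
  unfold pr; simp [h]

lemma comp_eq_of_condIndep {Ω 𝒳 𝒴 𝒵 : Type*} [Fintype Ω] (p : Ω → ℝ)
    (hp : ∀ ω, 0 ≤ p ω) (X : Ω → 𝒳) (f : 𝒳 → 𝒴) (Φ : 𝒳 → 𝒵)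
    (hCI : CondIndepGivenRepr p X f Φ) {x x' : 𝒳}
    (hx : 0 < pr p (fun ω => X ω = x)) (hx' : 0 < pr p (fun ω => X ω = x'))
    (hΦ : Φ x = Φ x') : f x = f x' := by
  by_contra hne
  have hφ : 0 < pr p (fun ω => Φ (X ω) = Φ x) :=
    lt_of_lt_of_le hx (pr_mono p hp fun ω h => by rw [h])
  have key := hCI x (f x') (Φ x) hφ
  have hL : pr p (fun ω => X ω = x ∧ f (X ω) = f x' ∧ Φ (X ω) = Φ x) = 0 :=
    pr_eq_zero p fun ω h => hne (h.1 ▸ h.2.1)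
  have h1 : 0 < pr p (fun ω => X ω = x ∧ Φ (X ω) = Φ x) :=
    lt_of_lt_of_le hx (le_of_eq (pr_congr p fun ω => ⟨fun h => ⟨h, by rw [h]⟩, fun h => h.1⟩))
  have h2 : 0 < pr p (fun ω => f (X ω) = f x' ∧ Φ (X ω) = Φ x) :=
    lt_of_lt_of_le hx' (pr_mono p hp fun ω h => by rw [h, hΦ]; exact ⟨rfl, rfl⟩)
  rw [hL, zero_div] at key
  have : 0 < (pr p (fun ω => X ω = x ∧ Φ (X ω) = Φ x) / pr p (fun ω => Φ (X ω) = Φ x)) *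
      (pr p (fun ω => f (X ω) = f x' ∧ Φ (X ω) = Φ x) / pr p (fun ω => Φ (X ω) = Φ x)) :=
    mul_pos (div_pos h1 hφ) (div_pos h2 hφ)
  rw [← key] at this
  exact lt_irrefl 0 this

/-- If `X = (X^∅, X^a, X^y, X^Δ)` satisfies the four conditional independencies
`X ⫫ X^i | Φ(X)` on a finite probability space, then `Φ` restricted to the support
of `X` is injective. -/
theorem four_condIndep_imply_injOn_support
    {Ω Wnoise Wa Wy WΔ 𝒵 : Type*} [Fintype Ω]
    (p : Ω → ℝ) (hp : ∀ ω, 0 ≤ p ω) (hsum : ∑ ω, p ω = 1)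
    (X : Ω → Wnoise × Wa × Wy × WΔ) (Φ : Wnoise × Wa × Wy × WΔ → 𝒵)
    (hCInoise : CondIndepGivenRepr p X (fun x => x.1) Φ)
    (hCIa : CondIndepGivenRepr p X (fun x => x.2.1) Φ)
    (hCIy : CondIndepGivenRepr p X (fun x => x.2.2.1) Φ)
    (hCIΔ : CondIndepGivenRepr p X (fun x => x.2.2.2) Φ) :
    Set.InjOn Φ {x | 0 < pr p (fun ω => X ω = x)} := by
  intro x hx x' hx' hΦ
  have h1 := comp_eq_of_condIndep p hp X _ Φ hCInoise hx hx' hΦ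
  have h2 := comp_eq_of_condIndep p hp X _ Φ hCIa hx hx' hΦ
  have h3 := comp_eq_of_condIndep p hp X _ Φ hCIy hx hx' hΦ
  have h4 := comp_eq_of_condIndep p hp X _ Φ hCIΔ hx hx' hΦ
  exact Prod.ext h1 (Prod.ext h2 (Prod.ext h3 h4))
end

section
/- If the representation propensity equals the covariate propensity on a fiber, i.e., P(A = a | X = x) = P(A = a | Φ(X) = φ) for all x with Φ(x) = φ, then the conditional law of X given Φ(X)=φ is unchanged by further conditioning on A: P(X = x | A = a, Φ(X) = φ) = P(X = x | Φ(X) = φ), and consequently the representation-induced confounding bias at φ is zero: E(Y[1]−Y[0] | Φ(X)=φ) = E(Y | A=1, Φ(X)=φ) − E(Y | A=0, Φ(X)=φ). -/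
open scoped Classical

/-- Conditional expectation `E(Y | E)` under a finite mass function. -/
noncomputable def cexp {Ω : Type*} [Fintype Ω] (p : Ω → ℝ) (Y : Ω → ℝ) (E : Ω → Prop) : ℝ :=
  (∑ ω, if E ω then p ω * Y ω else 0) / pr p E

lemma sum_zero_of_pr_zero {Ω : Type*} [Fintype Ω] (p : Ω → ℝ) (hp : ∀ ω, 0 ≤ p ω)
    {E : Ω → Prop} [DecidablePred E] (h : pr p E = 0) (W : Ω → ℝ) :
    (∑ ω, if E ω then p ω * W ω else 0) = 0 := by
  have h' : (∑ i, if E i then p i else 0) = 0 := by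
    have e : (∑ i, if E i then p i else 0) = pr p E := by
      unfold pr
      apply Finset.sum_congr rfl
      intro ω _
      by_cases hE : E ω <;> simp [hE]
    rw [e, h]
  have hz : ∀ ω, E ω → p ω = 0 := by
    intro ω hE
    have hnn : ∀ i ∈ Finset.univ, (0:ℝ) ≤ if E i then p i else 0 := by
      intro i _; split_ifs <;> simp [hp i]
    have := (Finset.sum_eq_zero_iff_of_nonneg hnn).1 h' ω (Finset.mem_univ ω)
    simpa [hE] using this
  apply Finset.sum_eq_zero
  intro ω _
  split_ifs with hE
  · rw [hz ω hE, zero_mul]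
  · rfl

lemma cexp_eq {Ω : Type*} [Fintype Ω] (p : Ω → ℝ) (Y : Ω → ℝ) (E : Ω → Prop)
    [DecidablePred E] :
    cexp p Y E = (∑ ω, if E ω then p ω * Y ω else 0) / pr p E := by
  unfold cexp
  congr 1
  apply Finset.sum_congr rfl
  intro ω _
  by_cases h : E ω <;> simp [h]

/-- Group a weighted sum over an event by the values of `(Y0, Y1)`. -/
lemma sum_group_vals {Ω : Type*} [Fintype Ω] (p : Ω → ℝ) (Y0 Y1 : Ω → ℝ)
    (E : Ω → Prop) [DecidablePred E] (g : ℝ → ℝ → ℝ) :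
    (∑ ω, if E ω then p ω * g (Y0 ω) (Y1 ω) else 0)
      = ∑ t ∈ Finset.univ.image (fun ω => (Y0 ω, Y1 ω)),
          g t.1 t.2 * pr p (fun ω => Y0 ω = t.1 ∧ Y1 ω = t.2 ∧ E ω) := by
  rw [← Finset.sum_fiberwise_of_maps_to (g := fun ω => (Y0 ω, Y1 ω))
        (fun ω _ => Finset.mem_image_of_mem _ (Finset.mem_univ ω))
        (fun ω => if E ω then p ω * g (Y0 ω) (Y1 ω) else 0)]
  apply Finset.sum_congr rfl
  intro t _
  rw [Finset.sum_filter]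
  unfold pr
  rw [Finset.mul_sum]
  apply Finset.sum_congr rfl
  intro ω _
  by_cases h1 : (Y0 ω, Y1 ω) = t
  · subst h1
    by_cases h2 : E ω <;> simp [h2] <;> ring
  · have h2 : ¬ (Y0 ω = t.1 ∧ Y1 ω = t.2 ∧ E ω) := by
      rintro ⟨a, b, -⟩; exact h1 (Prod.ext a b)
    simp [h1, h2]

/-- The key exchangeability consequence, for any function of the potential outcomes. -/
lemma key_exch {Ω 𝒳 : Type*} [Fintype Ω] (p : Ω → ℝ) (X : Ω → 𝒳) (A : Ω → ℕ)
    (Y0 Y1 : Ω → ℝ)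
    (hexch : ∀ (x : 𝒳) (a : ℕ) (y0 y1 : ℝ),
      pr p (fun ω => A ω = a ∧ Y0 ω = y0 ∧ Y1 ω = y1 ∧ X ω = x) * pr p (fun ω => X ω = x)
        = pr p (fun ω => A ω = a ∧ X ω = x) *
          pr p (fun ω => Y0 ω = y0 ∧ Y1 ω = y1 ∧ X ω = x))
    (g : ℝ → ℝ → ℝ) (a : ℕ) (x : 𝒳) :
    (∑ ω, if A ω = a ∧ X ω = x then p ω * g (Y0 ω) (Y1 ω) else 0) * pr p (fun ω => X ω = x)
      = pr p (fun ω => A ω = a ∧ X ω = x)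
          * (∑ ω, if X ω = x then p ω * g (Y0 ω) (Y1 ω) else 0) := by
  rw [sum_group_vals, sum_group_vals, Finset.sum_mul, Finset.mul_sum]
  apply Finset.sum_congr rfl
  intro t _
  have e1 : pr p (fun ω => Y0 ω = t.1 ∧ Y1 ω = t.2 ∧ (A ω = a ∧ X ω = x))
      = pr p (fun ω => A ω = a ∧ Y0 ω = t.1 ∧ Y1 ω = t.2 ∧ X ω = x) :=
    pr_congr p (fun ω => by tauto)
  rw [mul_assoc, e1, hexch x a t.1 t.2]
  ring

/-- Split a sum over the fiber `Φ (X ω) = φ` by the value of `X`. -/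
lemma split_by_X {Ω 𝒳 𝒵 : Type*} [Fintype Ω] (X : Ω → 𝒳) (Φ : 𝒳 → 𝒵) (φ : 𝒵)
    (P : Ω → Prop) [DecidablePred P] (G : Ω → ℝ) :
    (∑ ω, if P ω ∧ Φ (X ω) = φ then G ω else 0)
      = ∑ x ∈ Finset.univ.image X,
          if Φ x = φ then (∑ ω, if P ω ∧ X ω = x then G ω else 0) else 0 := by
  rw [← Finset.sum_fiberwise_of_maps_to (g := X)
        (fun ω _ => Finset.mem_image_of_mem _ (Finset.mem_univ ω))
        (fun ω => if P ω ∧ Φ (X ω) = φ then G ω else 0)]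
  apply Finset.sum_congr rfl
  intro x _
  by_cases hx : Φ x = φ
  · simp only [hx, if_true]
    rw [Finset.sum_filter]
    apply Finset.sum_congr rfl
    intro ω _
    by_cases h1 : X ω = x
    · simp [h1, hx]
    · have h2 : ¬(P ω ∧ X ω = x) := fun h => h1 h.2
      simp [h1, h2]
  · simp only [hx, if_false]
    apply Finset.sum_eq_zero
    intro ω hω
    rw [Finset.mem_filter] at hω
    simp [hω.2, hx]

/-- If the covariate propensity is constant on the fiber of `φ` and equals the representation
propensity, i.e. `P(A = a | X = x) = P(A = a | Φ(X) = φ)` for all `x` with `Φ(x) = φ`, then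
`P(X = x | A = a, Φ(X) = φ) = P(X = x | Φ(X) = φ)`, and the representation-induced
confounding bias at `φ` is zero:
`E(Y[1]−Y[0] | Φ(X)=φ) = E(Y | A=1, Φ(X)=φ) − E(Y | A=0, Φ(X)=φ)`. -/
theorem equal_propensity_implies_zero_ricb
    {Ω 𝒳 𝒵 : Type*} [Fintype Ω]
    (p : Ω → ℝ) (hp : ∀ ω, 0 ≤ p ω) (hsum : ∑ ω, p ω = 1)
    (X : Ω → 𝒳) (A : Ω → ℕ) (hA : ∀ ω, A ω ≤ 1)
    (Y0 Y1 Y : Ω → ℝ) (Φ : 𝒳 → 𝒵)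
    (hexch : ∀ (x : 𝒳) (a : ℕ) (y0 y1 : ℝ),
      pr p (fun ω => A ω = a ∧ Y0 ω = y0 ∧ Y1 ω = y1 ∧ X ω = x) * pr p (fun ω => X ω = x)
        = pr p (fun ω => A ω = a ∧ X ω = x) *
          pr p (fun ω => Y0 ω = y0 ∧ Y1 ω = y1 ∧ X ω = x))
    (hcons : ∀ ω, Y ω = if A ω = 1 then Y1 ω else Y0 ω)
    (hoverlap : ∀ x : 𝒳, 0 < pr p (fun ω => X ω = x) →
      0 < pr p (fun ω => A ω = 1 ∧ X ω = x) ∧ 0 < pr p (fun ω => A ω = 0 ∧ X ω = x))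
    (φ : 𝒵)
    (hφ1 : 0 < pr p (fun ω => A ω = 1 ∧ Φ (X ω) = φ))
    (hφ0 : 0 < pr p (fun ω => A ω = 0 ∧ Φ (X ω) = φ))
    (hprop : ∀ x : 𝒳, 0 < pr p (fun ω => X ω = x) → Φ x = φ → ∀ a ∈ ({0, 1} : Set ℕ),
      pr p (fun ω => A ω = a ∧ X ω = x) / pr p (fun ω => X ω = x)
        = pr p (fun ω => A ω = a ∧ Φ (X ω) = φ) / pr p (fun ω => Φ (X ω) = φ)) :
    (∀ x : 𝒳, 0 < pr p (fun ω => X ω = x) → Φ x = φ → ∀ a ∈ ({0, 1} : Set ℕ),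
      pr p (fun ω => X ω = x ∧ A ω = a) / pr p (fun ω => A ω = a ∧ Φ (X ω) = φ)
        = pr p (fun ω => X ω = x) / pr p (fun ω => Φ (X ω) = φ)) ∧
    cexp p (fun ω => Y1 ω - Y0 ω) (fun ω => Φ (X ω) = φ)
      = cexp p Y (fun ω => A ω = 1 ∧ Φ (X ω) = φ)
        - cexp p Y (fun ω => A ω = 0 ∧ Φ (X ω) = φ) := by
  have hΦpos : 0 < pr p (fun ω => Φ (X ω) = φ) :=
    lt_of_lt_of_le hφ1 (pr_mono p hp (fun ω h => h.2))
  have hφa : ∀ a ∈ ({0, 1} : Set ℕ), 0 < pr p (fun ω => A ω = a ∧ Φ (X ω) = φ) := by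
    intro a ha
    rcases ha with rfl | ha
    · exact hφ0
    · rw [Set.mem_singleton_iff] at ha; subst ha; exact hφ1
  constructor
  · intro x hxp hxφ a ha
    have h := hprop x hxp hxφ a ha
    have e : pr p (fun ω => X ω = x ∧ A ω = a) = pr p (fun ω => A ω = a ∧ X ω = x) :=
      pr_congr p (fun ω => and_comm)
    rw [e, div_eq_div_iff (ne_of_gt (hφa a ha)) (ne_of_gt hΦpos)]
    rw [div_eq_div_iff (ne_of_gt hxp) (ne_of_gt hΦpos)] at h
    linarith
  · -- main conditional expectation identity
    have main : ∀ a ∈ ({0, 1} : Set ℕ), ∀ g : ℝ → ℝ → ℝ,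
        (∀ ω, A ω = a → Y ω = g (Y0 ω) (Y1 ω)) →
        cexp p Y (fun ω => A ω = a ∧ Φ (X ω) = φ)
          = (∑ ω, if Φ (X ω) = φ then p ω * g (Y0 ω) (Y1 ω) else 0)
              / pr p (fun ω => Φ (X ω) = φ) := by
      intro a ha g hg
      rw [cexp_eq]
      have hnum : (∑ ω, if A ω = a ∧ Φ (X ω) = φ then p ω * Y ω else 0)
          = ∑ ω, if A ω = a ∧ Φ (X ω) = φ then p ω * g (Y0 ω) (Y1 ω) else 0 := by
        apply Finset.sum_congr rfl
        intro ω _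
        split_ifs with h
        · rw [hg ω h.1]
        · rfl
      set r := pr p (fun ω => A ω = a ∧ Φ (X ω) = φ) / pr p (fun ω => Φ (X ω) = φ) with hr_def
      have hr : pr p (fun ω => A ω = a ∧ Φ (X ω) = φ) = r * pr p (fun ω => Φ (X ω) = φ) :=
        (div_mul_cancel₀ _ (ne_of_gt hΦpos)).symm
      have hrpos : 0 < r := div_pos (hφa a ha) hΦpos
      have hM : (∑ ω, if Φ (X ω) = φ then p ω * g (Y0 ω) (Y1 ω) else 0)
          = ∑ x ∈ Finset.univ.image X,
              if Φ x = φ then (∑ ω, if X ω = x then p ω * g (Y0 ω) (Y1 ω) else 0) else 0 := by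
        have := split_by_X X Φ φ (fun _ => True) (fun ω => p ω * g (Y0 ω) (Y1 ω))
        simpa using this
      have hNM : (∑ ω, if A ω = a ∧ Φ (X ω) = φ then p ω * g (Y0 ω) (Y1 ω) else 0)
          = r * (∑ ω, if Φ (X ω) = φ then p ω * g (Y0 ω) (Y1 ω) else 0) := by
        rw [split_by_X X Φ φ (fun ω => A ω = a) (fun ω => p ω * g (Y0 ω) (Y1 ω)), hM,
          Finset.mul_sum]
        apply Finset.sum_congr rfl
        intro x _
        by_cases hxφ : Φ x = φ
        · simp only [hxφ, if_true]
          by_cases hxp : 0 < pr p (fun ω => X ω = x)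
          · have h1 := key_exch p X A Y0 Y1 hexch g a x
            have h2 : pr p (fun ω => A ω = a ∧ X ω = x) = r * pr p (fun ω => X ω = x) := by
              have h3 := hprop x hxp hxφ a ha
              rw [div_eq_iff (ne_of_gt hxp)] at h3
              exact h3
            exact mul_right_cancel₀ (ne_of_gt hxp) (by rw [h1, h2]; ring)
          · have hx0 : pr p (fun ω => X ω = x) = 0 :=
              le_antisymm (not_lt.1 hxp) (pr_nonneg p hp _)
            have hE0 : pr p (fun ω => A ω = a ∧ X ω = x) = 0 :=
              le_antisymm (hx0 ▸ pr_mono p hp (fun ω h => h.2)) (pr_nonneg p hp _)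
            rw [sum_zero_of_pr_zero p hp hE0, sum_zero_of_pr_zero p hp hx0]
            ring
        · simp [hxφ]
      rw [hnum, hNM, hr, mul_div_mul_left _ _ (ne_of_gt hrpos)]
    have h1 := main 1 (by simp) (fun _ y1 => y1) (fun ω h => by rw [hcons ω, if_pos h])
    have h0 := main 0 (by simp) (fun y0 _ => y0) (fun ω h => by
      rw [hcons ω, if_neg (by omega)])
    rw [h1, h0, ← sub_div, cexp_eq]
    congr 1
    rw [← Finset.sum_sub_distrib]
    apply Finset.sum_congr rfl
    intro ω _
    split_ifs with h
    · ring
    · ring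
end

section
/- MSM constraint transfer: if the odds-ratio bound Γ⁻¹ ≤ (π₀^φ(φ)/π₁^φ(φ))·(π₁(x)/π₀(x)) ≤ Γ holds for all x in the fiber of φ, then the density-ratio bound 1/((1−Γ)π_a^φ(φ) + Γ) ≤ π_a(x)/π_a^φ(φ) ≤ 1/((1−Γ⁻¹)π_a^φ(φ) + Γ⁻¹) holds for a = 1, for all x in the fiber, where π₁(x) = P(A=1|X=x), π₀(x) = 1−π₁(x), π₁^φ(φ) = P(A=1|Φ(X)=φ), π₀^φ = 1 − π₁^φ. -/
/-- MSM constraint transfer: if the odds-ratio bound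
`Γ⁻¹ ≤ ((1−π)/π)·(p/(1−p)) ≤ Γ` holds (with `π = π₁^φ(φ)` the representation propensity
and `p = π₁(x)` the covariate propensity on the fiber), then the density-ratio bound
`1/((1−Γ)π + Γ) ≤ p/π ≤ 1/((1−Γ⁻¹)π + Γ⁻¹)` holds. -/
theorem msm_constraint_transfer
    (Γ π p : ℝ) (hΓ : 1 ≤ Γ) (hπ0 : 0 < π) (hπ1 : π < 1) (hp0 : 0 < p) (hp1 : p < 1)
    (hlow : Γ⁻¹ ≤ ((1 - π) / π) * (p / (1 - p)))
    (hhigh : ((1 - π) / π) * (p / (1 - p)) ≤ Γ) :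
    1 / ((1 - Γ) * π + Γ) ≤ p / π ∧ p / π ≤ 1 / ((1 - Γ⁻¹) * π + Γ⁻¹) := by
  have hΓ0 : (0:ℝ) < Γ := lt_of_lt_of_le one_pos hΓ
  have hΓi : (0:ℝ) < Γ⁻¹ := inv_pos.mpr hΓ0
  have h1p : (0:ℝ) < 1 - p := by linarith
  have h1π : (0:ℝ) < 1 - π := by linarith
  have hd1 : (0:ℝ) < (1 - Γ) * π + Γ := by nlinarith
  have hd2 : (0:ℝ) < (1 - Γ⁻¹) * π + Γ⁻¹ := by nlinarith
  have hΓinv : Γ⁻¹ * Γ = 1 := inv_mul_cancel₀ (ne_of_gt hΓ0)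
  have kh : (1 - π) * p ≤ Γ * (π * (1 - p)) := by
    have := hhigh
    rw [div_mul_div_comm, div_le_iff₀ (by positivity)] at this
    linarith [this]
  have kl : Γ⁻¹ * (π * (1 - p)) ≤ (1 - π) * p := by
    have := hlow
    rw [div_mul_div_comm, le_div_iff₀ (by positivity)] at this
    linarith [this]
  have km : π * (1 - p) ≤ Γ * ((1 - π) * p) := by
    have h := mul_le_mul_of_nonneg_left kl hΓ0.le
    rw [← mul_assoc, mul_inv_cancel₀ (ne_of_gt hΓ0), one_mul] at h
    exact h
  have kmi : Γ⁻¹ * ((1 - π) * p) ≤ π * (1 - p) := by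
    have h := mul_le_mul_of_nonneg_left kh hΓi.le
    rw [show Γ⁻¹ * (Γ * (π * (1 - p))) = (Γ⁻¹ * Γ) * (π * (1 - p)) by ring, hΓinv, one_mul] at h
    linarith [h]
  constructor
  · rw [div_le_div_iff₀ hd1 hπ0]
    nlinarith [km]
  · rw [div_le_div_iff₀ hπ0 hd2]
    nlinarith [kmi]
end
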